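/- arXiv:1902.03213 — 8 statements merged into one kernel-verified Lean document; each statement's English description precedes it below -/
import Mathlib

section
/- Let F be a graph, r ≥ 2, m = min(C(r,2), |E(F)|) and t' = floor(t/m). Then every r-uniform hypergraph that is a t-heavy copy of F contains a subhypergraph that is a t'-wise Berge copy of F. -/
open Finset

/-- `H` contains a `t`-heavy copy of the graph `F`: an injective placement of `V(F)`
such that every edge of `F` is contained in at least `t` hyperedges of `H`. -/
def HasHeavyCopy {V α : Type*} [DecidableEq V] (H : Finset (Finset V))
    (F : SimpleGraph α) (t : ℕ) : Prop :=
  ∃ i : α ↪ V, ∀ x y, F.Adj x y →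
    t ≤ (H.filter (fun A => i x ∈ A ∧ i y ∈ A)).card

/-- `H` contains a `t`-wise Berge copy of the graph `F`: an injective placement of `V(F)`
together with `t` hyperedges assigned to each edge of `F`, pairwise disjoint over distinct
edges, each containing both endpoints of its edge. -/
def HasBergeCopy {V α : Type*} (H : Finset (Finset V))
    (F : SimpleGraph α) (t : ℕ) : Prop :=
  ∃ (i : α ↪ V) (h : Sym2 α → Finset (Finset V)),
    (∀ e ∈ F.edgeSet, h e ⊆ H ∧ (h e).card = t ∧ ∀ A ∈ h e, ∀ x ∈ e, i x ∈ A) ∧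
    ∀ e ∈ F.edgeSet, ∀ e' ∈ F.edgeSet, e ≠ e' → Disjoint (h e) (h e')

/-- The Turán number of `t`-heavy copies of `F` for `r`-uniform hypergraphs on `n` vertices. -/
noncomputable def exHeavy {α : Type*} (n r t : ℕ) (F : SimpleGraph α) : ℕ :=
  sSup {m | ∃ H : Finset (Finset (Fin n)), (∀ A ∈ H, A.card = r) ∧
    ¬ HasHeavyCopy H F t ∧ H.card = m}

/-- The Turán number of `t`-wise Berge copies of `F` for `r`-uniform hypergraphs on `n` vertices. -/
noncomputable def exBerge {α : Type*} (n r t : ℕ) (F : SimpleGraph α) : ℕ :=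
  sSup {m | ∃ H : Finset (Finset (Fin n)), (∀ A ∈ H, A.card = r) ∧
    ¬ HasBergeCopy H F t ∧ H.card = m}

/-- `G` contains a copy of `F` as a subgraph. -/
def GraphContains {α β : Type*} (F : SimpleGraph α) (G : SimpleGraph β) : Prop :=
  ∃ f : α ↪ β, ∀ x y, F.Adj x y → G.Adj (f x) (f y)

/-- The number of `r`-cliques of `G`. -/
noncomputable def cliqueCount {β : Type*} [Fintype β] [DecidableEq β]
    (r : ℕ) (G : SimpleGraph β) : ℕ :=
  letI := Classical.decRel G.Adj
  (G.cliqueFinset r).card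

/-- The number of edges of `G`. -/
noncomputable def edgeCount {β : Type*} [Fintype β] [DecidableEq β] (G : SimpleGraph β) : ℕ :=
  letI := Classical.decRel G.Adj
  G.edgeFinset.card

/-- The generalized Turán number `ex(n, K_r, F)`. -/
noncomputable def exClique {α : Type*} (n r : ℕ) (F : SimpleGraph α) : ℕ :=
  sSup {m | ∃ G : SimpleGraph (Fin n), ¬ GraphContains F G ∧ cliqueCount r G = m}

/-- The Turán number `ex(n, F)`. -/
noncomputable def exTuran {α : Type*} (n : ℕ) (F : SimpleGraph α) : ℕ :=
  sSup {m | ∃ G : SimpleGraph (Fin n), ¬ GraphContains F G ∧ edgeCount G = m}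

/-!
Let `S e` be the set of hyperedges containing the image of the edge `e` of `F`; heaviness says
`|S e| ≥ t`. A hyperedge `A` lies in `S e` for at most `m` edges `e`: for at most `C(r, 2)` of
them because distinct edges map to distinct pairs inside `A`, and trivially for at most `|E(F)|`.
Double counting then gives `|⋃_{e ∈ E'} S e| ≥ t |E'| / m ≥ t' |E'|` for every set `E'` of edges,
which is Hall's condition for matching `t'` copies of every edge to distinct hyperedges.
-/

open Function

namespace Finset

variable {ι β : Type*} [DecidableEq β]

theorem div_mul_card_le_card_biUnion {s : Finset ι} {S : ι → Finset β} {t m : ℕ}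
    (hS : ∀ e ∈ s, t ≤ #(S e)) (hdeg : ∀ b ∈ s.biUnion S, #{e ∈ s | b ∈ S e} ≤ m) :
    t / m * #s ≤ #(s.biUnion S) := by
  rcases m.eq_zero_or_pos with rfl | hm
  · simp
  have hcount : #s * t ≤ #(s.biUnion S) * m := by
    refine card_mul_le_card_mul (fun e b => b ∈ S e) (fun e he => ?_) hdeg
    rw [bipartiteAbove, filter_mem_eq_inter, inter_eq_right.mpr (subset_biUnion_of_mem S he)]
    exact hS e he
  refine Nat.le_of_mul_le_mul_right ?_ hm
  calc t / m * #s * m = t / m * m * #s := by ring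
    _ ≤ t * #s := Nat.mul_le_mul_right _ (Nat.div_mul_le_self t m)
    _ ≤ #(s.biUnion S) * m := by rw [mul_comm]; exact hcount

theorem exists_injective_prod_fin_of_forall_mul_card_le (S : ι → Finset β) (k : ℕ)
    (hall : ∀ s : Finset ι, k * #s ≤ #(s.biUnion S)) :
    ∃ f : ι × Fin k → β, f.Injective ∧ ∀ p, f p ∈ S p.1 := by
  classical
  refine (all_card_le_biUnion_card_iff_exists_injective fun p : ι × Fin k => S p.1).mp
    fun s => ?_
  calc #s ≤ #(s.image Prod.fst ×ˢ (univ : Finset (Fin k))) :=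
        card_le_card fun p hp => mem_product.mpr ⟨mem_image_of_mem _ hp, mem_univ _⟩
    _ = k * #(s.image Prod.fst) := by rw [card_product, card_univ, Fintype.card_fin, mul_comm]
    _ ≤ #((s.image Prod.fst).biUnion S) := hall _
    _ = #(s.biUnion fun p => S p.1) := by rw [image_biUnion]

theorem exists_pairwise_disjoint_subset_card_eq (S : ι → Finset β) (k : ℕ)
    (hall : ∀ s : Finset ι, k * #s ≤ #(s.biUnion S)) :
    ∃ g : ι → Finset β, (∀ e, g e ⊆ S e ∧ #(g e) = k) ∧ Pairwise (Disjoint on g) := by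
  obtain ⟨f, hf, hfS⟩ := exists_injective_prod_fin_of_forall_mul_card_le S k hall
  refine ⟨fun e => univ.image fun j => f (e, j), fun e => ⟨?_, ?_⟩, fun e e' hne => ?_⟩
  · simpa [image_subset_iff] using fun j => hfS (e, j)
  · exact (card_image_of_injective _ (hf.comp (Prod.mk_right_injective e))).trans
      (card_fin k)
  · simp only [Function.onFun, disjoint_left, mem_image, mem_univ, true_and]
    rintro _ ⟨j, rfl⟩ ⟨j', hj⟩
    exact hne (congrArg Prod.fst (hf hj)).symm

theorem card_le_choose_two_of_subset_sym2 {s : Finset (Sym2 β)} {A : Finset β}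
    (hsA : s ⊆ A.sym2) (hdiag : ∀ z ∈ s, ¬ z.IsDiag) : #s ≤ (#A).choose 2 := by
  rw [← Sym2.card_image_offDiag]
  refine card_le_card fun z hz => ?_
  induction z using Sym2.ind with
  | h a b =>
    have hab : a ∈ A ∧ b ∈ A := by simpa [mem_sym2_iff] using hsA hz
    exact mem_image.mpr ⟨(a, b), by simpa [hab] using hdiag _ hz, rfl⟩

end Finset

section Hypergraph

variable {V α : Type*} [DecidableEq V] {F : SimpleGraph α} {H : Finset (Finset V)} {t : ℕ}

theorem HasHeavyCopy.exists_le_card_filter_map_mem_sym2 (h : HasHeavyCopy H F t) :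
    ∃ i : α ↪ V, ∀ e ∈ F.edgeSet, t ≤ #{A ∈ H | e.map i ∈ A.sym2} := by
  obtain ⟨i, hi⟩ := h
  refine ⟨i, fun e he => ?_⟩
  induction e using Sym2.ind with
  | h x y => simpa only [Sym2.map_mk, mk_mem_sym2_iff] using hi x y he

theorem card_filter_map_mem_sym2_le_choose_two (i : α ↪ V) (A : Finset V)
    (s : Finset F.edgeSet) :
    #(s.filter fun e : F.edgeSet => (e : Sym2 α).map i ∈ A.sym2) ≤ (#A).choose 2 := by
  have hinj : Injective fun e : F.edgeSet => (e : Sym2 α).map i :=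
    (Sym2.map.injective i.injective).comp Subtype.val_injective
  rw [← card_image_of_injective _ hinj]
  refine card_le_choose_two_of_subset_sym2 (fun z hz => ?_) (fun z hz => ?_)
  · obtain ⟨e, he, rfl⟩ := mem_image.mp hz
    exact (mem_filter.mp he).2
  · obtain ⟨e, -, rfl⟩ := mem_image.mp hz
    rw [Sym2.isDiag_map i.injective]
    exact F.not_isDiag_of_mem_edgeSet e.2

theorem hasBergeCopy_of_pairwise_disjoint (i : α ↪ V) (g : F.edgeSet → Finset (Finset V))
    (hg : ∀ e, g e ⊆ {A ∈ H | (e : Sym2 α).map i ∈ A.sym2} ∧ #(g e) = t)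
    (hdisj : Pairwise (Disjoint on g)) : HasBergeCopy H F t := by
  refine ⟨i, extend Subtype.val g fun _ => ∅, fun e he => ?_, fun e he e' he' hne => ?_⟩
  · rw [Subtype.val_injective.extend_apply g (fun _ => ∅) ⟨e, he⟩]
    obtain ⟨hsub, hcard⟩ := hg ⟨e, he⟩
    refine ⟨hsub.trans (filter_subset _ _), hcard, fun A hA x hx => ?_⟩
    exact mem_sym2_iff.mp (mem_filter.mp (hsub hA)).2 (i x) (Sym2.mem_map.mpr ⟨x, hx, rfl⟩)
  · rw [Subtype.val_injective.extend_apply g (fun _ => ∅) ⟨e, he⟩,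
      Subtype.val_injective.extend_apply g (fun _ => ∅) ⟨e', he'⟩]
    exact hdisj fun h => hne (congrArg Subtype.val h)

end Hypergraph

theorem heavy_copy_contains_berge_general {V α : Type*} [DecidableEq V] [Fintype α]
    (F : SimpleGraph α) [DecidableRel F.Adj] (r t : ℕ)
    (H : Finset (Finset V)) (hunif : ∀ A ∈ H, A.card = r)
    (hheavy : HasHeavyCopy H F t) :
    HasBergeCopy H F (t / min (r.choose 2) F.edgeFinset.card) := by
  obtain ⟨i, hi⟩ := hheavy.exists_le_card_filter_map_mem_sym2
  let S : F.edgeSet → Finset (Finset V) := fun e => {A ∈ H | (e : Sym2 α).map i ∈ A.sym2}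
  have hdeg : ∀ s : Finset F.edgeSet, ∀ A ∈ s.biUnion S,
      #{e ∈ s | A ∈ S e} ≤ min (r.choose 2) #F.edgeFinset := by
    intro s A hA
    obtain ⟨_, -, hAS⟩ := mem_biUnion.mp hA
    refine le_min ?_ ?_
    · rw [← hunif A (mem_filter.mp hAS).1]
      exact (card_le_card (monotone_filter_right s fun _ _ hAe => (mem_filter.mp hAe).2)).trans
        (card_filter_map_mem_sym2_le_choose_two i A s)
    · exact (card_filter_le _ _).trans ((card_le_univ _).trans_eq F.edgeFinset_card.symm)
  obtain ⟨g, hg, hdisj⟩ := exists_pairwise_disjoint_subset_card_eq S _ fun s =>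
    div_mul_card_le_card_biUnion (fun e _ => hi e e.2) (hdeg s)
  exact hasBergeCopy_of_pairwise_disjoint i g hg hdisj

theorem heavy_copy_contains_berge {V α : Type*} [DecidableEq V] [Fintype α] [DecidableEq α]
    (F : SimpleGraph α) [DecidableRel F.Adj] (r t : ℕ) (hr : 2 ≤ r)
    (H : Finset (Finset V)) (hunif : ∀ A ∈ H, A.card = r)
    (hheavy : HasHeavyCopy H F t) :
    HasBergeCopy H F (t / min (r.choose 2) F.edgeFinset.card) :=
  heavy_copy_contains_berge_general F r t H hunif hheavy
end

section
/- If t ≥ |V(F)| + |E(F)| − 2, then every 3-uniform hypergraph that is a t-heavy copy of F contains the 3-uniform expansion F^{+3} of F as a subhypergraph. -/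
open Finset

/-! Let `i` be the heavy copy. For an edge `xy` of `F`, a hyperedge through `{i x, i y}` is
determined by its third vertex, so at least `t` vertices complete that pair to a hyperedge.
At most `|V(F)| - 2` of them lie on the copy, leaving at least `|E(F)|` candidates for each of
the `|E(F)|` edges; Hall's condition is then automatic, and distinct representatives give the
expansion. -/

section Link

variable {V : Type*} [DecidableEq V]

def link (H : Finset (Finset V)) (s : Finset V) : Finset V :=
  (H.filter (s ⊆ ·)).biUnion (· \ s)

theorem mem_link {H : Finset (Finset V)} {s : Finset V} {v : V} :
    v ∈ link H s ↔ ∃ A ∈ H, s ⊆ A ∧ v ∈ A ∧ v ∉ s := by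
  simp [link, and_assoc]

/-- In an `(#s + 1)`-uniform hypergraph, a hyperedge through `s` is `insert v s` for a vertex
`v` of the link. -/
theorem card_filter_superset_le_card_link {H : Finset (Finset V)} {s : Finset V}
    (hH : ∀ A ∈ H, #A = #s + 1) : #(H.filter (s ⊆ ·)) ≤ #(link H s) := by
  calc #(H.filter (s ⊆ ·)) ≤ #((link H s).image (insert · s)) := card_le_card ?_
    _ ≤ #(link H s) := card_image_le
  intro A hA
  obtain ⟨hAH, hsA⟩ := mem_filter.1 hA
  obtain ⟨v, hv⟩ : (A \ s).Nonempty := by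
    rw [← card_pos, card_sdiff_of_subset hsA, hH A hAH]
    omega
  obtain ⟨hvA, hvs⟩ := mem_sdiff.1 hv
  refine mem_image.2 ⟨v, mem_link.2 ⟨A, hAH, hsA, hvA, hvs⟩, ?_⟩
  refine eq_of_subset_of_card_le (insert_subset hvA hsA) ?_
  rw [hH A hAH, card_insert_of_notMem hvs]

theorem card_link_add_card_le {H : Finset (Finset V)} {s B : Finset V} (hsB : s ⊆ B) :
    #(link H s) + #s ≤ #(link H s \ B) + #B := by
  have hdisj : ∀ v ∈ link H s, v ∉ s := fun v hv => by
    obtain ⟨-, -, -, -, hvs⟩ := mem_link.1 hv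
    exact hvs
  have hsdiff : link H s \ (B \ s) = link H s \ B := by
    ext v
    have := hdisj v
    grind
  have := card_le_card_sdiff_add_card (s := link H s) (t := B \ s)
  rw [hsdiff, card_sdiff_of_subset hsB] at this
  have := card_le_card hsB
  omega

end Link

theorem exists_injective_mem_of_card_le {ι β : Type*} [Fintype ι] [DecidableEq β]
    (t : ι → Finset β) (ht : ∀ i, Fintype.card ι ≤ #(t i)) :
    ∃ f : ι → β, Function.Injective f ∧ ∀ i, f i ∈ t i := by
  refine (all_card_le_biUnion_card_iff_exists_injective t).1 fun s => ?_
  obtain rfl | ⟨i, hi⟩ := s.eq_empty_or_nonempty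
  · simp
  calc #s ≤ Fintype.card ι := card_le_univ s
    _ ≤ #(t i) := ht i
    _ ≤ #(s.biUnion t) := card_le_card (subset_biUnion_of_mem t hi)

theorem card_edgeFinset_le_card_link_sdiff {V α : Type*} [DecidableEq V] [Fintype α]
    [DecidableEq α] {F : SimpleGraph α} [DecidableRel F.Adj] {t : ℕ} {H : Finset (Finset V)}
    (ht : Fintype.card α + #F.edgeFinset - 2 ≤ t) (hH : ∀ A ∈ H, #A = 3) (i : α ↪ V)
    (hi : ∀ x y, F.Adj x y → t ≤ #(H.filter fun A => i x ∈ A ∧ i y ∈ A))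
    {e : Sym2 α} (he : e ∈ F.edgeSet) :
    #F.edgeFinset ≤ #(link H (e.map i).toFinset \ univ.map i) := by
  induction e using Sym2.ind with
  | _ x y =>
  rw [SimpleGraph.mem_edgeSet] at he
  rw [Sym2.map_mk, Sym2.toFinset_mk_eq]
  have hpair : #{i x, i y} = 2 := card_pair (i.injective.ne he.ne)
  have hsub : {i x, i y} ⊆ univ.map i := by
    simp [insert_subset_iff]
  have hfilter : H.filter ({i x, i y} ⊆ ·) = H.filter fun A => i x ∈ A ∧ i y ∈ A := by
    simp only [insert_subset_iff, singleton_subset_iff]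
  have hlink := card_filter_superset_le_card_link (H := H) (s := {i x, i y})
    (by rw [hpair]; exact hH)
  have hsdiff := card_link_add_card_le (H := H) hsub
  rw [hfilter] at hlink
  rw [hpair, card_map, card_univ] at hsdiff
  have := hi x y he
  omega

theorem heavy_copy_contains_expansion {V α : Type*} [DecidableEq V] [Fintype α] [DecidableEq α]
    (F : SimpleGraph α) [DecidableRel F.Adj] (t : ℕ)
    (ht : Fintype.card α + F.edgeFinset.card - 2 ≤ t)
    (H : Finset (Finset V)) (hunif : ∀ A ∈ H, A.card = 3)
    (hheavy : HasHeavyCopy H F t) :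
    ∃ (i : α ↪ V) (w : Sym2 α → V),
      (∀ e ∈ F.edgeSet, ∀ x : α, w e ≠ i x) ∧
      (∀ e ∈ F.edgeSet, ∀ e' ∈ F.edgeSet, e ≠ e' → w e ≠ w e') ∧
      (∀ e ∈ F.edgeSet, ∃ A ∈ H, w e ∈ A ∧ ∀ x ∈ e, i x ∈ A) := by
  obtain ⟨i, hi⟩ := hheavy
  obtain ⟨f, hf_inj, hf_mem⟩ := exists_injective_mem_of_card_le
    (fun e : F.edgeSet => link H ((e : Sym2 α).map i).toFinset \ univ.map i)
    (fun e => F.edgeFinset_card ▸ card_edgeFinset_le_card_link_sdiff ht hunif i hi e.2)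
  -- the value off `F.edgeSet` is arbitrary; `i (Quot.out e).1` is just some vertex of `V`
  let w : Sym2 α → V := fun e => if he : e ∈ F.edgeSet then f ⟨e, he⟩ else i (Quot.out e).1
  have hw : ∀ e (he : e ∈ F.edgeSet), w e = f ⟨e, he⟩ := fun e he => dif_pos he
  refine ⟨i, w, fun e he x => ?_, fun e he e' he' hne => ?_, fun e he => ?_⟩
  · have := (mem_sdiff.1 (hf_mem ⟨e, he⟩)).2
    rw [hw e he]
    exact fun h => this (h ▸ mem_map_of_mem i (mem_univ x))
  · rw [hw e he, hw e' he']
    exact fun h => hne (congrArg Subtype.val (hf_inj h))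
  · obtain ⟨A, hAH, heA, hwA, -⟩ := mem_link.1 (mem_sdiff.1 (hf_mem ⟨e, he⟩)).1
    refine ⟨A, hAH, hw e he ▸ hwA, fun x hx => heA ?_⟩
    exact Sym2.mem_toFinset.2 (Sym2.mem_map.2 ⟨x, hx, rfl⟩)
end

section
/- For any graph F, any r ≥ 3 and t ≥ 2, ex_r(n, B_t F) ≤ ex_r(n, B_{t−1} F) + C(n,2). -/
open Finset

/-! A maximal matching between the pairs of vertices and the hyperedges containing them uses at
most `C(n, 2)` hyperedges. If deleting them left a `(t-1)`-wise Berge copy of `F`, every edge of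
that copy would be a matched pair (otherwise the matching could be enlarged by one of the `t-1`
remaining hyperedges on it), and the hyperedges matched to the edges of the copy would extend it
to a `t`-wise Berge copy in the original hypergraph. -/

section PairMatching

variable {V : Type*} [DecidableEq V]

structure IsPairMatching (H : Finset (Finset V)) (P : Finset (Sym2 V))
    (φ : Sym2 V → Finset V) : Prop where
  not_isDiag : ∀ p ∈ P, ¬ p.IsDiag
  mem : ∀ p ∈ P, φ p ∈ H
  subset : ∀ p ∈ P, ∀ v ∈ p, v ∈ φ p
  injOn : Set.InjOn φ P

def IsPairMatching.Saturated (H : Finset (Finset V)) (P : Finset (Sym2 V))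
    (φ : Sym2 V → Finset V) : Prop :=
  ∀ p A, ¬ p.IsDiag → A ∈ H → (∀ v ∈ p, v ∈ A) → p ∈ P ∨ A ∈ P.image φ

variable {H : Finset (Finset V)} {P : Finset (Sym2 V)} {φ : Sym2 V → Finset V}

theorem IsPairMatching.card_image_le [Fintype V] (hM : IsPairMatching H P φ) :
    (P.image φ).card ≤ (Fintype.card V).choose 2 := by
  calc (P.image φ).card ≤ P.card := Finset.card_image_le
    _ ≤ (univ.filter fun p : Sym2 V => ¬ p.IsDiag).card :=
        card_le_card fun p hp => mem_filter.mpr ⟨mem_univ p, hM.not_isDiag p hp⟩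
    _ = (Fintype.card V).choose 2 := by
        rw [← Fintype.card_subtype, Sym2.card_subtype_not_diag]

theorem IsPairMatching.insert (hM : IsPairMatching H P φ) {p : Sym2 V} {A : Finset V}
    (hp : ¬ p.IsDiag) (hA : A ∈ H) (hpA : ∀ v ∈ p, v ∈ A) (hpP : p ∉ P)
    (hAP : A ∉ P.image φ) :
    IsPairMatching H (insert p P) (Function.update φ p A) := by
  have hupdate : ∀ q ∈ P, Function.update φ p A q = φ q := fun q hq =>
    Function.update_of_ne (ne_of_mem_of_not_mem hq hpP) A φ
  refine ⟨?_, ?_, ?_, ?_⟩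
  · simpa only [forall_mem_insert] using ⟨hp, hM.not_isDiag⟩
  · simp only [forall_mem_insert, Function.update_self]
    exact ⟨hA, fun q hq => hupdate q hq ▸ hM.mem q hq⟩
  · simp only [forall_mem_insert, Function.update_self]
    exact ⟨hpA, fun q hq => hupdate q hq ▸ hM.subset q hq⟩
  · rw [coe_insert, Set.injOn_insert (by simpa using hpP)]
    refine ⟨(hM.injOn.congr fun q hq => (hupdate q hq).symm), ?_⟩
    rintro ⟨q, hq, hqA⟩
    rw [Function.update_self, hupdate q hq] at hqA
    exact hAP (hqA ▸ mem_image_of_mem φ hq)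

theorem exists_saturated_pairMatching [Fintype V] (H : Finset (Finset V)) :
    ∃ P φ, IsPairMatching H P φ ∧ IsPairMatching.Saturated H P φ := by
  classical
  obtain ⟨⟨P, φ⟩, hmem, hmax⟩ := exists_max_image
    (univ.filter fun M : Finset (Sym2 V) × (Sym2 V → Finset V) => IsPairMatching H M.1 M.2)
    (fun M => M.1.card)
    ⟨(∅, fun _ => ∅), mem_filter.mpr ⟨mem_univ _, by constructor <;> simp⟩⟩
  have hM : IsPairMatching H P φ := (mem_filter.mp hmem).2
  refine ⟨P, φ, hM, fun p A hp hA hpA => ?_⟩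
  by_contra! hnew
  have hbigger := hmax (insert p P, Function.update φ p A)
    (mem_filter.mpr ⟨mem_univ _, hM.insert hp hA hpA hnew.1 hnew.2⟩)
  dsimp only at hbigger
  rw [card_insert_of_notMem hnew.1] at hbigger
  omega

end PairMatching

section BergeCopy

variable {V α : Type*} [DecidableEq V] {F : SimpleGraph α} {t : ℕ}

theorem hasBergeCopy_succ_of_saturated {H : Finset (Finset V)} {P : Finset (Sym2 V)}
    {φ : Sym2 V → Finset V} (hM : IsPairMatching H P φ) (hsat : IsPairMatching.Saturated H P φ)
    (ht : 0 < t) (hcopy : HasBergeCopy (H \ P.image φ) F t) : HasBergeCopy H F (t + 1) := by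
  obtain ⟨i, h, hedge, hdisj⟩ := hcopy
  have hnotin : ∀ e ∈ F.edgeSet, ∀ A ∈ h e, A ∈ H ∧ A ∉ P.image φ := fun e he A hA =>
    mem_sdiff.mp ((hedge e he).1 hA)
  have hmatched : ∀ e ∈ F.edgeSet, Sym2.map i e ∈ P := by
    intro e he
    obtain ⟨-, hcard, hends⟩ := hedge e he
    obtain ⟨A, hA⟩ := card_pos.mp (hcard ▸ ht)
    have hdiag : ¬ (Sym2.map i e).IsDiag := by
      rw [Sym2.isDiag_map i.injective]; exact F.not_isDiag_of_mem_edgeSet he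
    have hends' : ∀ v ∈ Sym2.map i e, v ∈ A := by
      simp only [Sym2.mem_map]; rintro _ ⟨x, hx, rfl⟩; exact hends A hA x hx
    exact (hsat _ A hdiag (hnotin e he A hA).1 hends').resolve_right (hnotin e he A hA).2
  have hfresh : ∀ e ∈ F.edgeSet, ∀ e' ∈ F.edgeSet, φ (Sym2.map i e) ∉ h e' :=
    fun e he e' he' hA => (hnotin e' he' _ hA).2 (mem_image_of_mem φ (hmatched e he))
  refine ⟨i, fun e => insert (φ (Sym2.map i e)) (h e), fun e he => ?_,
    fun e he e' he' hne => ?_⟩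
  · obtain ⟨hsub, hcard, hends⟩ := hedge e he
    refine ⟨insert_subset (hM.mem _ (hmatched e he)) fun A hA => (hnotin e he A hA).1,
      by rw [card_insert_of_notMem (hfresh e he e he), hcard], ?_⟩
    simp only [forall_mem_insert]
    exact ⟨fun x hx => hM.subset _ (hmatched e he) _ (Sym2.mem_map.mpr ⟨x, hx, rfl⟩), hends⟩
  · have hφne : φ (Sym2.map i e) ≠ φ (Sym2.map i e') := fun heq =>
      hne (Sym2.map.injective i.injective (hM.injOn (hmatched e he) (hmatched e' he') heq))
    simp only [disjoint_insert_left, disjoint_insert_right, mem_insert, not_or]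
    exact ⟨⟨hφne.symm, hfresh e' he' e he⟩, hfresh e he e' he', hdisj e he e' he' hne⟩

end BergeCopy

theorem card_le_exBerge {α : Type*} {F : SimpleGraph α} {n r t : ℕ}
    {H : Finset (Finset (Fin n))} (hunif : ∀ A ∈ H, A.card = r)
    (hfree : ¬ HasBergeCopy H F t) :
    H.card ≤ exBerge n r t F :=
  le_csSup ⟨Fintype.card (Finset (Fin n)), fun _ ⟨H', _, _, hcard⟩ =>
    hcard ▸ card_le_univ H'⟩ ⟨H, hunif, hfree, rfl⟩

theorem exBerge_recursion_general {α : Type*} (F : SimpleGraph α) (n r t : ℕ)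
    (ht : 2 ≤ t) :
    exBerge n r t F ≤ exBerge n r (t - 1) F + n.choose 2 := by
  refine csSup_le' ?_
  rintro _ ⟨H, hunif, hfree, rfl⟩
  obtain ⟨P, φ, hM, hsat⟩ := exists_saturated_pairMatching H
  have hfree' : ¬ HasBergeCopy (H \ P.image φ) F (t - 1) := fun hcopy =>
    hfree (Nat.sub_add_cancel (by omega : 1 ≤ t) ▸
      hasBergeCopy_succ_of_saturated hM hsat (by omega) hcopy)
  calc H.card ≤ (H \ P.image φ).card + (P.image φ).card := card_le_card_sdiff_add_card
    _ ≤ exBerge n r (t - 1) F + n.choose 2 := by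
        gcongr
        · exact card_le_exBerge (fun A hA => hunif A (sdiff_subset hA)) hfree'
        · simpa using hM.card_image_le

theorem exBerge_recursion {α : Type*} (F : SimpleGraph α) (n r t : ℕ)
    (hr : 3 ≤ r) (ht : 2 ≤ t) :
    exBerge n r t F ≤ exBerge n r (t - 1) F + n.choose 2 :=
  exBerge_recursion_general F n r t ht
end

section
/- For any graph F and integer t ≥ 1, there is a constant C = C(F, t) such that if H is a hypergraph on n vertices containing no t-wise Berge copy of F and every hyperedge of H has size at least |V(F)|, then the sum over hyperedges H' of H of |H'|² is at most C·n². -/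
open Finset

/-!
Call a pair of vertices light if fewer than `τ = t·|E(F)|` hyperedges contain it. If all pairs
of some `|V(F)|`-set are heavy, the pairs' hyperedge pools are large enough for Hall's theorem
to pick `t` private hyperedges for every edge of `F`, giving a Berge copy. So in a Berge-`F`-free
`H` every `k`-subset (`k = |V(F)|`) of a hyperedge `A` contains a light pair, and averaging
over these `k`-subsets shows that `A` contains at least `C(|A|,2) / C(k,2)` light pairs. Light
pairs lie in fewer than `τ` hyperedges each, so summing over `A` gives
`∑ C(|A|,2) ≤ C(k,2) · C(n,2) · τ`.
-/

def codegree {V : Type*} [DecidableEq V] (H : Finset (Finset V)) (p : Finset V) : ℕ :=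
  #(H.filter (p ⊆ ·))

theorem HasHeavyCopy.hasBergeCopy {V α : Type*} [DecidableEq V] {H : Finset (Finset V)}
    {F : SimpleGraph α} [Finite F.edgeSet] {t : ℕ}
    (hH : HasHeavyCopy H F (t * F.edgeSet.ncard)) : HasBergeCopy H F t := by
  classical
  obtain ⟨i, hi⟩ := hH
  have : Fintype (F.edgeSet × Fin t) := Fintype.ofFinite _
  let pool : Sym2 α → Finset (Finset V) := fun e => H.filter fun A => ∀ x ∈ e, i x ∈ A
  have hpool : ∀ e ∈ F.edgeSet, t * F.edgeSet.ncard ≤ #(pool e) := by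
    refine Sym2.ind fun x y hxy => ?_
    simpa only [pool, Sym2.forall_mem_pair] using hi x y hxy
  obtain ⟨f, hf, hfpool⟩ := (Finset.all_card_le_biUnion_card_iff_exists_injective
    fun q : F.edgeSet × Fin t => pool q.1).1 fun s => by
      obtain rfl | ⟨q, hq⟩ := s.eq_empty_or_nonempty
      · simp
      calc #s ≤ Fintype.card (F.edgeSet × Fin t) := s.card_le_univ
        _ = t * F.edgeSet.ncard := by
          rw [Fintype.card_eq_nat_card, Nat.card_prod, Nat.card_coe_set_eq,
            Nat.card_eq_fintype_card, Fintype.card_fin, mul_comm]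
        _ ≤ #(pool q.1) := hpool _ q.1.2
        _ ≤ #(s.biUnion fun q => pool q.1) :=
          card_le_card (subset_biUnion_of_mem (fun q => pool q.1) hq)
  refine ⟨i, fun e => if he : e ∈ F.edgeSet then univ.image fun j => f (⟨e, he⟩, j) else ∅,
    fun e he => ?_, fun e he e' he' hne => ?_⟩
  · simp only [dif_pos he]
    refine ⟨?_, ?_, ?_⟩
    · intro A hA
      obtain ⟨j, -, rfl⟩ := mem_image.1 hA
      exact (mem_filter.1 (hfpool _)).1
    · exact (card_image_of_injective _ (hf.comp (Prod.mk_right_injective _))).trans (card_fin t)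
    · intro A hA
      obtain ⟨j, -, rfl⟩ := mem_image.1 hA
      exact (mem_filter.1 (hfpool (⟨e, he⟩, j))).2
  · simp only [dif_pos he, dif_pos he', disjoint_left, mem_image, mem_univ, true_and]
    rintro _ ⟨j, rfl⟩ ⟨j', hj⟩
    exact hne (congrArg (fun q => q.1.1) (hf hj)).symm

theorem hasHeavyCopy_of_forall_le_codegree {V α : Type*} [Fintype α] [DecidableEq V]
    {H : Finset (Finset V)} (F : SimpleGraph α) {τ : ℕ} {W : Finset V}
    (hW : #W = Fintype.card α) (hheavy : ∀ p ∈ powersetCard 2 W, τ ≤ codegree H p) :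
    HasHeavyCopy H F τ := by
  let i : α ↪ V := (Fintype.equivOfCardEq (by rw [Fintype.card_coe, hW])).toEmbedding.trans
    (Function.Embedding.subtype (· ∈ W))
  have hiW : ∀ x, i x ∈ W := fun x => Subtype.prop _
  refine ⟨i, fun x y hxy => ?_⟩
  have hp : {i x, i y} ∈ powersetCard 2 W :=
    mem_powersetCard.2 ⟨insert_subset (hiW x) (singleton_subset_iff.2 (hiW y)),
      card_pair (i.injective.ne hxy.ne)⟩
  simpa only [codegree, insert_subset_iff, singleton_subset_iff] using hheavy _ hp

theorem sum_card_filter_codegree_lt_le {γ : Type*} [Fintype γ] [DecidableEq γ]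
    (H : Finset (Finset γ)) (τ : ℕ) :
    ∑ A ∈ H, #((powersetCard 2 A).filter (codegree H · < τ))
      ≤ (Fintype.card γ).choose 2 * τ := by
  set light := (powersetCard 2 univ).filter (codegree H · < τ)
  calc ∑ A ∈ H, #((powersetCard 2 A).filter (codegree H · < τ))
      = ∑ A ∈ H, #(light.bipartiteAbove (fun A p => p ⊆ A) A) := by
        refine sum_congr rfl fun A _ => congrArg card ?_
        ext p
        simp only [light, bipartiteAbove, mem_filter, mem_powersetCard, subset_univ, true_and]
        tauto
    _ = ∑ p ∈ light, codegree H p :=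
        sum_card_bipartiteAbove_eq_sum_card_bipartiteBelow _
    _ ≤ #light * τ := sum_le_card_nsmul _ _ _ fun p hp => (mem_filter.1 hp).2.le
    _ ≤ (Fintype.card γ).choose 2 * τ := by
        gcongr
        exact (card_filter_le _ _).trans (card_powersetCard 2 univ).le

section PairsInSubsets

variable {γ : Type*} {s : Finset γ} {k : ℕ} {P : Finset γ → Prop}

theorem two_le_of_forall_exists_pair (hks : k ≤ #s)
    (hP : ∀ W ∈ powersetCard k s, ∃ p ∈ powersetCard 2 W, P p) : 2 ≤ k := by
  obtain ⟨W, hW⟩ := powersetCard_nonempty.2 hks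
  obtain ⟨p, hp, -⟩ := hP W hW
  rw [← (mem_powersetCard.1 hp).2, ← (mem_powersetCard.1 hW).2]
  exact card_le_card (mem_powersetCard.1 hp).1

/-- Each pair of `s` lies in `C(|s|-2, k-2)` of the `k`-subsets, each of which contains a pair
satisfying `P`; compare with `C(|s|,k) · C(k,2) = C(|s|,2) · C(|s|-2,k-2)`. -/
theorem choose_two_le_choose_two_mul_card_filter [DecidableEq γ] [DecidablePred P]
    (hks : k ≤ #s) (hP : ∀ W ∈ powersetCard k s, ∃ p ∈ powersetCard 2 W, P p) :
    (#s).choose 2 ≤ k.choose 2 * #((powersetCard 2 s).filter P) := by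
  have h2k := two_le_of_forall_exists_pair hks hP
  set C := (#s - 2).choose (k - 2)
  have hcount : #(powersetCard k s) • 1 ≤ #((powersetCard 2 s).filter P) • C := by
    refine card_nsmul_le_card_nsmul (fun (W p : Finset γ) => p ⊆ W) (fun W hW => ?_)
      fun p hp => ?_
    · obtain ⟨p, hpW, hPp⟩ := hP W hW
      have hpW := mem_powersetCard.1 hpW
      have hWs := (mem_powersetCard.1 hW).1
      exact one_le_card.2 ⟨p, (mem_bipartiteAbove _).2 ⟨mem_filter.2
        ⟨mem_powersetCard.2 ⟨hpW.1.trans hWs, hpW.2⟩, hPp⟩, hpW.1⟩⟩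
    · obtain ⟨hps, hp2⟩ := mem_powersetCard.1 (mem_filter.1 hp).1
      rw [bipartiteBelow, card_filter_powersetCard_subset p s k hps (hp2 ▸ h2k), hp2]
      exact le_rfl
  rw [smul_eq_mul, smul_eq_mul, mul_one] at hcount
  refine Nat.le_of_mul_le_mul_right ?_ (Nat.choose_pos (by omega) : 0 < C)
  calc (#s).choose 2 * C = #(powersetCard k s) * k.choose 2 := by
        rw [card_powersetCard, Nat.choose_mul h2k]
    _ ≤ #((powersetCard 2 s).filter P) * C * k.choose 2 := Nat.mul_le_mul_right _ hcount
    _ = k.choose 2 * #((powersetCard 2 s).filter P) * C := by ring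

end PairsInSubsets

theorem sq_le_four_mul_choose_two {a : ℕ} (ha : 2 ≤ a) : a ^ 2 ≤ 4 * a.choose 2 := by
  obtain ⟨b, rfl⟩ := Nat.exists_eq_add_of_le' ha
  have h := Nat.add_one_mul_choose_eq (b + 1) 1
  simp only [Nat.choose_one_right] at h
  nlinarith

theorem sum_sq_sizes_quadratic_general {α : Type*} [Fintype α] (F : SimpleGraph α) (t : ℕ) :
    ∃ C : ℝ, ∀ (n : ℕ) (H : Finset (Finset (Fin n))),
      ¬ HasBergeCopy H F t → (∀ A ∈ H, Fintype.card α ≤ A.card) →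
      ∑ A ∈ H, ((A.card : ℝ)) ^ 2 ≤ C * (n : ℝ) ^ 2 := by
  set k := Fintype.card α
  set τ := t * F.edgeSet.ncard
  refine ⟨(4 * k.choose 2 * τ : ℕ), fun n H hB hsize => ?_⟩
  have hlight :
      ∀ A ∈ H, ∀ W ∈ powersetCard k A, ∃ p ∈ powersetCard 2 W, codegree H p < τ :=
    fun A _ W hW => by
      by_contra! hheavy
      exact hB
        (hasHeavyCopy_of_forall_le_codegree F (mem_powersetCard.1 hW).2 hheavy).hasBergeCopy
  have hsq (A) (hA : A ∈ H) :
      #A ^ 2 ≤ 4 * k.choose 2 * #((powersetCard 2 A).filter (codegree H · < τ)) := calc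
    #A ^ 2 ≤ 4 * (#A).choose 2 := sq_le_four_mul_choose_two
      ((two_le_of_forall_exists_pair (hsize A hA) (hlight A hA)).trans (hsize A hA))
    _ ≤ 4 * (k.choose 2 * #((powersetCard 2 A).filter (codegree H · < τ))) := by
      gcongr; exact choose_two_le_choose_two_mul_card_filter (hsize A hA) (hlight A hA)
    _ = _ := (mul_assoc ..).symm
  have hsum : ∑ A ∈ H, #A ^ 2 ≤ 4 * k.choose 2 * τ * n ^ 2 := calc
    ∑ A ∈ H, #A ^ 2
        ≤ 4 * k.choose 2 * ∑ A ∈ H, #((powersetCard 2 A).filter (codegree H · < τ)) := by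
      rw [mul_sum]; exact sum_le_sum hsq
    _ ≤ 4 * k.choose 2 * (n.choose 2 * τ) := by
      gcongr; simpa only [Fintype.card_fin] using sum_card_filter_codegree_lt_le H τ
    _ ≤ 4 * k.choose 2 * τ * n ^ 2 := by
      rw [mul_comm _ τ, ← mul_assoc]; exact Nat.mul_le_mul_left _ (Nat.choose_le_pow n 2)
  exact_mod_cast hsum

theorem sum_sq_sizes_quadratic {α : Type*} [Fintype α] (F : SimpleGraph α) (t : ℕ)
    (ht : 1 ≤ t) :
    ∃ C : ℝ, ∀ (n : ℕ) (H : Finset (Finset (Fin n))),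
      ¬ HasBergeCopy H F t → (∀ A ∈ H, Fintype.card α ≤ A.card) →
      ∑ A ∈ H, ((A.card : ℝ)) ^ 2 ≤ C * (n : ℝ) ^ 2 :=
  sum_sq_sizes_quadratic_general F t
end

section
/- For any graph F and integers r ≥ 2, t ≥ 1: ex(n, K_r, F) ≤ ex_r(n, H_t F) ≤ ex_r(n, B_t F) ≤ ex(n, K_r, F) + ex(n, F) + (t−1)·C(n,2). -/
open Finset

/-!
An `F`-free graph's `r`-cliques form a hypergraph without `t`-heavy copies of `F`, and every
`t`-wise Berge copy is `t`-heavy; this gives the first two inequalities.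

For the last one, assign the hyperedges of a Berge-`F`-free `r`-uniform hypergraph `H` greedily to
pairs of vertices inside them, at most `t` to each pair. The pairs receiving exactly `t` hyperedges
form a graph `G`, which is `F`-free because a copy of `F` in `G` carries a `t`-wise Berge copy.
An unassigned hyperedge has all its pairs full, so it is an `r`-clique of `G`; the assigned ones
number at most `t` per edge of `G` and `t - 1` per other pair, hence at most
`e(G) + (t - 1) C(n, 2)`.
-/

section Assignment

variable {V : Type*} [DecidableEq V]

def assigned (H : Finset (Finset V)) (σ : Finset V → Option (Sym2 V)) (p : Sym2 V) :
    Finset (Finset V) :=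
  H.filter (σ · = some p)

/-- `σ A = some p` assigns the hyperedge `A` to the pair `p`; `σ A = none` leaves it unassigned. -/
structure IsPairAssignment (H : Finset (Finset V)) (t : ℕ) (σ : Finset V → Option (Sym2 V)) :
    Prop where
  mem_sym2 : ∀ A ∈ H, ∀ p, σ A = some p → p ∈ A.sym2
  not_isDiag : ∀ A ∈ H, ∀ p, σ A = some p → ¬ p.IsDiag
  card_assigned_le : ∀ p, (assigned H σ p).card ≤ t

def IsSaturated (H : Finset (Finset V)) (t : ℕ) (σ : Finset V → Option (Sym2 V)) : Prop :=
  ∀ A ∈ H, σ A = none → ∀ x ∈ A, ∀ y ∈ A, x ≠ y → (assigned H σ s(x, y)).card = t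

variable {H : Finset (Finset V)} {t : ℕ} {σ : Finset V → Option (Sym2 V)}
  {A : Finset V} {p : Sym2 V}

lemma assigned_update_subset (q : Sym2 V) :
    assigned H (Function.update σ A (some p)) q ⊆ insert A (assigned H σ q) := by
  intro B hB
  by_cases hBA : B = A
  · exact hBA ▸ mem_insert_self _ _
  · simp_all [assigned]

lemma IsPairAssignment.update (hσ : IsPairAssignment H t σ) (hp : p ∈ A.sym2)
    (hpd : ¬ p.IsDiag) (hlt : (assigned H σ p).card < t) :
    IsPairAssignment H t (Function.update σ A (some p)) := by
  have hupd : ∀ B q, Function.update σ A (some p) B = some q →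
      B = A ∧ q = p ∨ σ B = some q := by
    intro B q hB
    by_cases hBA : B = A
    · subst hBA; simp_all
    · rw [Function.update_of_ne hBA] at hB; exact .inr hB
  refine ⟨fun B hB q hq => ?_, fun B hB q hq => ?_, fun q => ?_⟩
  · rcases hupd B q hq with ⟨rfl, rfl⟩ | h
    · exact hp
    · exact hσ.mem_sym2 B hB q h
  · rcases hupd B q hq with ⟨rfl, rfl⟩ | h
    · exact hpd
    · exact hσ.not_isDiag B hB q h
  · by_cases hqp : q = p
    · subst hqp
      exact (card_le_card (assigned_update_subset q)).trans
        ((card_insert_le _ _).trans hlt)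
    · refine le_trans (card_le_card fun B hB => ?_) (hσ.card_assigned_le q)
      have hB' := mem_filter.1 hB
      rcases hupd B q hB'.2 with ⟨-, rfl⟩ | h
      · exact absurd rfl hqp
      · exact mem_filter.2 ⟨hB'.1, h⟩

def fullGraph (H : Finset (Finset V)) (t : ℕ) (σ : Finset V → Option (Sym2 V)) : SimpleGraph V :=
  SimpleGraph.fromEdgeSet {p | (assigned H σ p).card = t}

lemma hasBergeCopy_of_graphContains_fullGraph {α : Type*} {F : SimpleGraph α}
    (hσ : IsPairAssignment H t σ) (hF : GraphContains F (fullGraph H t σ)) :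
    HasBergeCopy H F t := by
  obtain ⟨f, hf⟩ := hF
  refine ⟨f, fun e => assigned H σ (e.map f), fun e he => ?_, fun e _ e' _ hne => ?_⟩
  · induction e using Sym2.ind with
    | _ x y =>
      have hadj := (SimpleGraph.fromEdgeSet_adj _).1 (hf x y he)
      refine ⟨filter_subset _ _, hadj.1, fun B hB z hz => ?_⟩
      have hB' := mem_filter.1 hB
      exact mem_sym2_iff.1 (hσ.mem_sym2 B hB'.1 _ hB'.2) _ (Sym2.mem_map.2 ⟨z, hz, rfl⟩)
  · refine disjoint_filter.2 fun B _ hB hB' => hne (Sym2.map.injective f.injective ?_)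
    exact Option.some_injective _ (hB.symm.trans hB')

lemma IsSaturated.isNClique {r : ℕ} (hsat : IsSaturated H t σ) (hH : ∀ A ∈ H, A.card = r)
    (hA : A ∈ H) (hnone : σ A = none) : (fullGraph H t σ).IsNClique r A :=
  ⟨fun x hx y hy hxy =>
    (SimpleGraph.fromEdgeSet_adj _).2 ⟨hsat A hA hnone x hx y hy hxy, hxy⟩, hH A hA⟩

variable [Fintype V]

/-- An assignment leaving the fewest hyperedges unassigned is saturated: otherwise an unassigned
hyperedge could be given to a non-full pair inside it. -/
lemma exists_isPairAssignment_isSaturated (H : Finset (Finset V)) (t : ℕ) :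
    ∃ σ, IsPairAssignment H t σ ∧ IsSaturated H t σ := by
  classical
  obtain ⟨σ, hσ, hmin⟩ := exists_min_image (univ.filter (IsPairAssignment H t))
    (fun σ => (H.filter (σ · = none)).card)
    ⟨fun _ => none, mem_filter.2 ⟨mem_univ _, ⟨by simp, by simp, by simp [assigned]⟩⟩⟩
  replace hσ := (mem_filter.1 hσ).2
  refine ⟨σ, hσ, fun A hA hnone x hx y hy hxy => ?_⟩
  by_contra hne
  have hp : s(x, y) ∈ A.sym2 := mk_mem_sym2_iff.2 ⟨hx, hy⟩
  have hlt := lt_of_le_of_ne (hσ.card_assigned_le s(x, y)) hne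
  have hmin' := hmin _ (mem_filter.2 ⟨mem_univ _,
    hσ.update hp (Sym2.mk_isDiag_iff.not.2 hxy) hlt⟩)
  have hsub : H.filter (Function.update σ A (some s(x, y)) · = none) ⊂
      H.filter (σ · = none) := by
    refine ssubset_iff_of_subset (fun B hB => ?_) |>.2 ⟨A, mem_filter.2 ⟨hA, hnone⟩, by simp⟩
    have hBA : B ≠ A := by rintro rfl; simp at hB
    simpa [Function.update_of_ne hBA] using hB
  exact (card_lt_card hsub).not_ge hmin'

lemma IsPairAssignment.card_assigned_le_fullGraph [DecidableRel (fullGraph H t σ).Adj]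
    (hσ : IsPairAssignment H t σ) (p : Sym2 V) :
    (assigned H σ p).card ≤ (if p.IsDiag then 0 else t - 1) +
      if p ∈ (fullGraph H t σ).edgeFinset then 1 else 0 := by
  by_cases hp : p.IsDiag
  · have hempty : assigned H σ p = ∅ :=
      filter_eq_empty_iff.2 fun A hA hAp => hσ.not_isDiag A hA p hAp hp
    simp [hempty]
  · have hle := hσ.card_assigned_le p
    by_cases hfull : (assigned H σ p).card = t
    · have hedge : p ∈ (fullGraph H t σ).edgeFinset := by
        rw [SimpleGraph.mem_edgeFinset, fullGraph, SimpleGraph.edgeSet_fromEdgeSet]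
        exact ⟨hfull, hp⟩
      simp only [hp, hedge, if_true, if_false]
      omega
    · simp only [hp, if_false]; omega

lemma IsPairAssignment.card_filter_ne_none_le [DecidableRel (fullGraph H t σ).Adj]
    (hσ : IsPairAssignment H t σ) :
    (H.filter (σ · ≠ none)).card ≤
      (fullGraph H t σ).edgeFinset.card + (t - 1) * (Fintype.card V).choose 2 := by
  have hcover : H.filter (σ · ≠ none) ⊆ univ.biUnion (assigned H σ) := fun A hA => by
    obtain ⟨hAH, hA⟩ := mem_filter.1 hA
    obtain ⟨p, hp⟩ := Option.ne_none_iff_exists'.1 hA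
    exact mem_biUnion.2 ⟨p, mem_univ _, mem_filter.2 ⟨hAH, hp⟩⟩
  calc (H.filter (σ · ≠ none)).card
      ≤ ∑ p, (assigned H σ p).card := (card_le_card hcover).trans card_biUnion_le
    _ ≤ ∑ p : Sym2 V, ((if p.IsDiag then 0 else t - 1) +
          if p ∈ (fullGraph H t σ).edgeFinset then 1 else 0) :=
        sum_le_sum fun p _ => hσ.card_assigned_le_fullGraph p
    _ = (fullGraph H t σ).edgeFinset.card + (t - 1) * (Fintype.card V).choose 2 := by
        rw [sum_add_distrib, sum_boole, sum_ite, sum_const_zero, zero_add, sum_const,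
          smul_eq_mul, ← Fintype.card_subtype, Sym2.card_subtype_not_diag, filter_mem_eq_inter,
          univ_inter, Nat.cast_id, mul_comm, add_comm]

end Assignment

lemma cliqueCount_eq {β : Type*} [Fintype β] [DecidableEq β] (r : ℕ) (G : SimpleGraph β)
    [DecidableRel G.Adj] : cliqueCount r G = (G.cliqueFinset r).card := by
  unfold cliqueCount
  congr!

lemma edgeCount_eq {β : Type*} [Fintype β] [DecidableEq β] (G : SimpleGraph β)
    [DecidableRel G.Adj] : edgeCount G = G.edgeFinset.card := by
  unfold edgeCount
  congr!

lemma exists_not_graphContains_card_le {V α : Type*} [Fintype V] [DecidableEq V]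
    {F : SimpleGraph α} {H : Finset (Finset V)} {r t : ℕ} (hH : ∀ A ∈ H, A.card = r)
    (hB : ¬ HasBergeCopy H F t) :
    ∃ G : SimpleGraph V, ¬ GraphContains F G ∧
      H.card ≤ cliqueCount r G + edgeCount G + (t - 1) * (Fintype.card V).choose 2 := by
  classical
  obtain ⟨σ, hσ, hsat⟩ := exists_isPairAssignment_isSaturated H t
  refine ⟨fullGraph H t σ, fun hF => hB (hasBergeCopy_of_graphContains_fullGraph hσ hF), ?_⟩
  have hclique : H.filter (σ · = none) ⊆ (fullGraph H t σ).cliqueFinset r := fun A hA => by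
    obtain ⟨hAH, hnone⟩ := mem_filter.1 hA
    exact SimpleGraph.mem_cliqueFinset_iff.2 (hsat.isNClique hH hAH hnone)
  rw [cliqueCount_eq, edgeCount_eq, add_assoc, ← card_filter_add_card_filter_not (σ · = none)]
  exact add_le_add (card_le_card hclique) hσ.card_filter_ne_none_le

lemma HasBergeCopy.hasHeavyCopy {V α : Type*} [DecidableEq V] {H : Finset (Finset V)}
    {F : SimpleGraph α} {t : ℕ} (hB : HasBergeCopy H F t) : HasHeavyCopy H F t := by
  obtain ⟨i, h, hprop, -⟩ := hB
  refine ⟨i, fun x y hxy => ?_⟩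
  obtain ⟨hsub, hcard, hmem⟩ := hprop s(x, y) hxy
  exact hcard ▸ card_le_card fun A hA => mem_filter.2
    ⟨hsub hA, hmem A hA x (Sym2.mem_mk_left x y), hmem A hA y (Sym2.mem_mk_right x y)⟩

lemma HasHeavyCopy.graphContains {V α : Type*} [DecidableEq V] {H : Finset (Finset V)}
    {F : SimpleGraph α} {G : SimpleGraph V} {t : ℕ} (ht : 1 ≤ t) (hH : HasHeavyCopy H F t)
    (hclique : ∀ A ∈ H, G.IsClique (A : Set V)) : GraphContains F G := by
  obtain ⟨i, hi⟩ := hH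
  refine ⟨i, fun x y hxy => ?_⟩
  obtain ⟨A, hA⟩ := card_pos.1 (ht.trans (hi x y hxy))
  obtain ⟨hAH, hx, hy⟩ := mem_filter.1 hA
  exact hclique A hAH hx hy (i.injective.ne hxy.ne)

section TuranNumbers

variable {α : Type*} {n r t : ℕ} {F : SimpleGraph α}

lemma le_exHeavy {H : Finset (Finset (Fin n))} (hH : ∀ A ∈ H, A.card = r)
    (hF : ¬ HasHeavyCopy H F t) : H.card ≤ exHeavy n r t F :=
  le_csSup ⟨Fintype.card (Finset (Fin n)), by rintro _ ⟨H, -, -, rfl⟩; exact card_le_univ H⟩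
    ⟨H, hH, hF, rfl⟩

lemma le_exBerge {H : Finset (Finset (Fin n))} (hH : ∀ A ∈ H, A.card = r)
    (hF : ¬ HasBergeCopy H F t) : H.card ≤ exBerge n r t F :=
  le_csSup ⟨Fintype.card (Finset (Fin n)), by rintro _ ⟨H, -, -, rfl⟩; exact card_le_univ H⟩
    ⟨H, hH, hF, rfl⟩

lemma le_exClique {G : SimpleGraph (Fin n)} (hG : ¬ GraphContains F G) :
    cliqueCount r G ≤ exClique n r F :=
  le_csSup ⟨Fintype.card (Finset (Fin n)), by rintro _ ⟨G, -, rfl⟩; exact card_le_univ _⟩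
    ⟨G, hG, rfl⟩

lemma le_exTuran {G : SimpleGraph (Fin n)} (hG : ¬ GraphContains F G) :
    edgeCount G ≤ exTuran n F :=
  le_csSup ⟨Fintype.card (Sym2 (Fin n)), by rintro _ ⟨G, -, rfl⟩; exact card_le_univ _⟩
    ⟨G, hG, rfl⟩

lemma exHeavy_le {N : ℕ}
    (h : ∀ H : Finset (Finset (Fin n)), (∀ A ∈ H, A.card = r) → ¬ HasHeavyCopy H F t →
      H.card ≤ N) :
    exHeavy n r t F ≤ N :=
  csSup_le' <| by rintro _ ⟨H, hH, hF, rfl⟩; exact h H hH hF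

lemma exBerge_le {N : ℕ}
    (h : ∀ H : Finset (Finset (Fin n)), (∀ A ∈ H, A.card = r) → ¬ HasBergeCopy H F t →
      H.card ≤ N) :
    exBerge n r t F ≤ N :=
  csSup_le' <| by rintro _ ⟨H, hH, hF, rfl⟩; exact h H hH hF

lemma exClique_le {N : ℕ}
    (h : ∀ G : SimpleGraph (Fin n), ¬ GraphContains F G → cliqueCount r G ≤ N) :
    exClique n r F ≤ N :=
  csSup_le' <| by rintro _ ⟨G, hG, rfl⟩; exact h G hG

end TuranNumbers

theorem exHeavy_exBerge_sandwich_general {α : Type*} (F : SimpleGraph α) (n r t : ℕ)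
    (ht : 1 ≤ t) :
    exClique n r F ≤ exHeavy n r t F ∧
    exHeavy n r t F ≤ exBerge n r t F ∧
    exBerge n r t F ≤ exClique n r F + exTuran n F + (t - 1) * n.choose 2 := by
  classical
  refine ⟨exClique_le fun G hG => ?_, exHeavy_le fun H hH hF => ?_, exBerge_le fun H hH hF => ?_⟩
  · rw [cliqueCount_eq]
    refine le_exHeavy (fun A hA => (SimpleGraph.mem_cliqueFinset_iff.1 hA).2) fun hheavy => ?_
    exact hG (hheavy.graphContains ht fun A hA => (SimpleGraph.mem_cliqueFinset_iff.1 hA).1)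
  · exact le_exBerge hH (mt HasBergeCopy.hasHeavyCopy hF)
  · obtain ⟨G, hG, hcard⟩ := exists_not_graphContains_card_le hH hF
    rw [Fintype.card_fin] at hcard
    exact hcard.trans (by gcongr; exacts [le_exClique hG, le_exTuran hG])

theorem exHeavy_exBerge_sandwich {α : Type*} (F : SimpleGraph α) (n r t : ℕ)
    (hr : 2 ≤ r) (ht : 1 ≤ t) :
    exClique n r F ≤ exHeavy n r t F ∧
    exHeavy n r t F ≤ exBerge n r t F ∧
    exBerge n r t F ≤ exClique n r F + exTuran n F + (t - 1) * n.choose 2 :=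
  exHeavy_exBerge_sandwich_general F n r t ht
end

section
/- Let r ≥ 3, t ≥ 2, and let F be a connected graph such that F has no vertex cover of size at most (t−1)(r−2). Then the r-uniform hypergraph H on n vertices consisting of all r-sets of the form A_i ∪ {x, y}, where A_1, …, A_{t−1} are fixed pairwise disjoint (r−2)-sets of vertices and x, y are two vertices outside all A_i, contains no t-heavy copy of F, and has (t−1−o(1))·C(n,2) hyperedges. -/
open Finset

/-- The construction: all r-sets consisting of one of the fixed disjoint (r-2)-sets
`A i` together with two vertices outside all the `A j`. -/
def conH (n r : ℕ) {k : ℕ} (A : Fin k → Finset (Fin n)) : Finset (Finset (Fin n)) :=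
  ((Finset.univ : Finset (Fin n)).powersetCard r).filter
    (fun B => ∃ i : Fin k, ∃ x y : Fin n, x ≠ y ∧ (∀ j, x ∉ A j) ∧ (∀ j, y ∉ A j) ∧
      B = A i ∪ {x, y})

/-!
Two vertices outside `⋃ A i` lie together only in the `t - 1` hyperedges `A i ∪ {x, y}`, so they
are never `t`-heavy. Hence a `t`-heavy copy of `F` has every edge meeting `⋃ A i`, and the
preimage of `⋃ A i` is a vertex cover of `F` with at most `(t - 1)(r - 2)` vertices. The
hyperedges correspond bijectively to pairs `(i, {x, y})`, so there are
`(t - 1) · C(n - (t - 1)(r - 2), 2)` of them.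
-/

theorem card_biUnion_univ_eq_mul {ι V : Type*} [Fintype ι] [DecidableEq V] {A : ι → Finset V}
    {m : ℕ} (hA : ∀ j, (A j).card = m) (hd : ∀ i j, i ≠ j → Disjoint (A i) (A j)) :
    (univ.biUnion A).card = Fintype.card ι * m := by
  rw [card_biUnion fun i _ j _ hij => hd i j hij]
  simp [hA]

section conH

variable {n r k : ℕ} {A : Fin k → Finset (Fin n)}

/-- Only the hyperedges `A j ∪ {u, v}` contain both `u` and `v`. -/
theorem conH_card_filter_mem_mem_le {u v : Fin n} (huv : u ≠ v)
    (hu : u ∉ univ.biUnion A) (hv : v ∉ univ.biUnion A) :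
    ((conH n r A).filter (fun B => u ∈ B ∧ v ∈ B)).card ≤ k := by
  have hsub : (conH n r A).filter (fun B => u ∈ B ∧ v ∈ B) ⊆
      univ.image (fun j => A j ∪ {u, v}) := by
    intro B hB
    obtain ⟨hBmem, huB, hvB⟩ := mem_filter.mp hB
    obtain ⟨-, j, x, y, hxy, -, -, rfl⟩ := mem_filter.mp hBmem
    have hAj : ∀ w ∉ univ.biUnion A, w ∈ A j ∪ {x, y} → w ∈ ({x, y} : Finset (Fin n)) :=
      fun w hw hwB => (mem_union.mp hwB).resolve_left
        fun h => hw (mem_biUnion.mpr ⟨j, mem_univ j, h⟩)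
    have hpair : ({u, v} : Finset (Fin n)) = {x, y} := by
      refine eq_of_subset_of_card_le ?_ (by rw [card_pair hxy, card_pair huv])
      rw [insert_subset_iff, singleton_subset_iff]
      exact ⟨hAj u hu huB, hAj v hv hvB⟩
    exact mem_image.mpr ⟨j, mem_univ j, by rw [hpair]⟩
  calc _ ≤ (univ.image (fun j => A j ∪ {u, v})).card := card_le_card hsub
    _ ≤ (univ : Finset (Fin k)).card := card_image_le
    _ = k := card_fin k

/-- The cover is the preimage of `⋃ A j`. -/
theorem exists_vertexCover_of_hasHeavyCopy_conH {α : Type*} {F : SimpleGraph α} {t : ℕ}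
    (hkt : k < t) (h : HasHeavyCopy (conH n r A) F t) :
    ∃ S : Finset α, S.card ≤ (univ.biUnion A).card ∧
      ∀ x y, F.Adj x y → x ∈ S ∨ y ∈ S := by
  obtain ⟨i, hi⟩ := h
  refine ⟨(univ.biUnion A).preimage i i.injective.injOn,
    card_le_card_of_injOn i (fun _ ha => mem_preimage.mp ha) i.injective.injOn, ?_⟩
  intro x y hxy
  simp only [mem_preimage]
  by_contra! hout
  have hne : i x ≠ i y := fun he => hxy.ne (i.injective he)
  have := conH_card_filter_mem_mem_le (r := r) hne hout.1 hout.2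
  have := hi x y hxy
  omega

theorem conH_eq_image_prod (hr : 2 ≤ r) (hA : ∀ j, (A j).card = r - 2) :
    conH n r A = (univ ×ˢ (univ.biUnion A)ᶜ.powersetCard 2).image (fun p => A p.1 ∪ p.2) := by
  have hout : ∀ x : Fin n, x ∈ (univ.biUnion A)ᶜ ↔ ∀ j, x ∉ A j := by simp
  ext B
  simp only [conH, mem_filter, mem_powersetCard, mem_image, mem_product, mem_univ, true_and,
    subset_univ, Prod.exists]
  constructor
  · rintro ⟨-, i, x, y, hxy, hx, hy, rfl⟩
    refine ⟨i, {x, y}, ⟨?_, card_pair hxy⟩, rfl⟩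
    rw [insert_subset_iff, singleton_subset_iff, hout, hout]
    exact ⟨hx, hy⟩
  · rintro ⟨i, p, ⟨hp, hpcard⟩, rfl⟩
    obtain ⟨x, y, hxy, rfl⟩ := card_eq_two.mp hpcard
    rw [insert_subset_iff, singleton_subset_iff, hout, hout] at hp
    have hdisj : Disjoint (A i) {x, y} := by
      rw [disjoint_insert_right, disjoint_singleton_right]
      exact ⟨hp.1 i, hp.2 i⟩
    refine ⟨?_, i, x, y, hxy, hp.1, hp.2, rfl⟩
    rw [card_union_of_disjoint hdisj, hA i, card_pair hxy]
    omega

/-- A hyperedge `A i ∪ p` with `p` outside `⋃ A j` determines `A i` and `p` as its parts inside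
and outside `⋃ A j`; nonempty disjoint blocks then determine `i`. -/
theorem injOn_union_of_subset_compl_biUnion (hne : ∀ j, (A j).Nonempty)
    (hd : ∀ i j, i ≠ j → Disjoint (A i) (A j)) :
    Set.InjOn (fun p : Fin k × Finset (Fin n) => A p.1 ∪ p.2)
      {p | p.2 ⊆ (univ.biUnion A)ᶜ} := by
  have hsplit : ∀ i (p : Finset (Fin n)), p ⊆ (univ.biUnion A)ᶜ →
      (A i ∪ p) ∩ univ.biUnion A = A i ∧ (A i ∪ p) \ univ.biUnion A = p := by
    intro i p hp
    have hAU : A i ⊆ univ.biUnion A := subset_biUnion_of_mem A (mem_univ i)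
    have hpU : Disjoint p (univ.biUnion A) := subset_compl_iff_disjoint_right.mp hp
    rw [union_inter_distrib_right, inter_eq_left.mpr hAU, disjoint_iff_inter_eq_empty.mp hpU,
      union_empty, union_sdiff_distrib, sdiff_eq_empty_iff_subset.mpr hAU, hpU.sdiff_eq_left,
      empty_union]
    exact ⟨rfl, rfl⟩
  rintro ⟨i, p⟩ hp ⟨j, q⟩ hq heq
  obtain ⟨hi, hp'⟩ := hsplit i p hp
  obtain ⟨hj, hq'⟩ := hsplit j q hq
  simp only at heq
  have hAij : A i = A j := by rw [← hi, ← hj, heq]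
  have hij : i = j := by
    by_contra h
    exact (hne i).ne_empty ((hd i j h).eq_bot_of_le (hAij ▸ le_rfl))
  rw [hij, ← hp', ← hq', heq]

theorem conH_card (hr : 3 ≤ r) (hA : ∀ j, (A j).card = r - 2)
    (hd : ∀ i j, i ≠ j → Disjoint (A i) (A j)) :
    (conH n r A).card = k * (n - k * (r - 2)).choose 2 := by
  have hne : ∀ j, (A j).Nonempty := fun j => card_pos.mp (by rw [hA j]; omega)
  rw [conH_eq_image_prod (by omega) hA, card_image_of_injOn, card_product, card_univ,
    Fintype.card_fin, card_powersetCard, card_compl, Fintype.card_fin,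
    card_biUnion_univ_eq_mul hA hd, Fintype.card_fin]
  refine (injOn_union_of_subset_compl_biUnion hne hd).mono fun p hp => ?_
  exact (mem_powersetCard.mp (mem_product.mp hp).2).1

end conH

theorem Nat.choose_two_le_choose_two_sub_add (n c : ℕ) :
    n.choose 2 ≤ (n - c).choose 2 + c * (n - 1) := by
  induction c with
  | zero => simp
  | succ c ih =>
    have hstep : (n - c).choose 2 ≤ (n - (c + 1)).choose 2 + (n - 1) := by
      rcases Nat.lt_or_ge c n with h | h
      · obtain ⟨m, hm⟩ : ∃ m, n - c = m + 1 := ⟨n - c - 1, by omega⟩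
        rw [hm, show n - (c + 1) = m by omega, Nat.choose_succ_succ' m 1, Nat.choose_one_right]
        change m + m.choose 2 ≤ m.choose 2 + (n - 1)
        omega
      · simp [Nat.sub_eq_zero_of_le h]
    rw [add_mul, one_mul]
    omega

theorem exists_forall_ge_choose_two_sub {a ε : ℝ} (ha : 0 ≤ a) (hε : 0 < ε) (c : ℕ) :
    ∃ N : ℕ, ∀ n ≥ N, (a - ε) * n.choose 2 ≤ a * (n - c).choose 2 ∧
      a * (n - c).choose 2 ≤ (a + ε) * n.choose 2 := by
  refine ⟨⌈2 * a * c / ε⌉₊ + 1, fun n hn => ⟨?_, ?_⟩⟩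
  · have hn1 : (1 : ℝ) ≤ n := by exact_mod_cast (by omega : 1 ≤ n)
    have hle : (n.choose 2 : ℝ) ≤ (n - c).choose 2 + c * ((n : ℝ) - 1) := by
      have := Nat.choose_two_le_choose_two_sub_add n c
      rw [← Nat.cast_le (α := ℝ)] at this
      push_cast [Nat.cast_sub (by omega : 1 ≤ n)] at this
      exact this
    have hN : 2 * a * c ≤ ε * n := by
      rw [← div_le_iff₀' hε]
      exact (Nat.le_ceil _).trans (by exact_mod_cast (by omega : ⌈2 * a * c / ε⌉₊ ≤ n))
    rw [Nat.cast_choose_two ℝ n] at hle ⊢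
    nlinarith [mul_le_mul_of_nonneg_left hle ha,
      mul_le_mul_of_nonneg_right hN (by linarith : (0 : ℝ) ≤ n - 1)]
  · have hmono : ((n - c).choose 2 : ℝ) ≤ n.choose 2 :=
      by exact_mod_cast Nat.choose_le_choose 2 (Nat.sub_le n c)
    nlinarith [(Nat.cast_nonneg (n.choose 2) : (0 : ℝ) ≤ _)]

theorem conH_no_heavy_copy_general {α : Type*} (F : SimpleGraph α) (r t : ℕ)
    (hr : 3 ≤ r) (ht : 2 ≤ t)
    (hcov : ¬ ∃ S : Finset α, S.card ≤ (t - 1) * (r - 2) ∧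
      ∀ x y, F.Adj x y → x ∈ S ∨ y ∈ S) :
    (∀ (n : ℕ) (A : Fin (t - 1) → Finset (Fin n)),
      (∀ i, (A i).card = r - 2) → (∀ i j, i ≠ j → Disjoint (A i) (A j)) →
      ¬ HasHeavyCopy (conH n r A) F t) ∧
    (∀ ε : ℝ, 0 < ε → ∃ N : ℕ, ∀ n ≥ N, ∀ A : Fin (t - 1) → Finset (Fin n),
      (∀ i, (A i).card = r - 2) → (∀ i j, i ≠ j → Disjoint (A i) (A j)) →
      ((t : ℝ) - 1 - ε) * (n.choose 2) ≤ ((conH n r A).card : ℝ) ∧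
      ((conH n r A).card : ℝ) ≤ ((t : ℝ) - 1 + ε) * (n.choose 2)) := by
  refine ⟨fun n A hA hd hheavy => hcov ?_, fun ε hε => ?_⟩
  · simpa only [card_biUnion_univ_eq_mul hA hd, Fintype.card_fin] using
      exists_vertexCover_of_hasHeavyCopy_conH (by omega) hheavy
  · have ht1 : ((t - 1 : ℕ) : ℝ) = (t : ℝ) - 1 := by
      rw [Nat.cast_sub (by omega), Nat.cast_one]
    obtain ⟨N, hN⟩ := exists_forall_ge_choose_two_sub (a := (t : ℝ) - 1)
      (by rw [← ht1]; positivity) hε ((t - 1) * (r - 2))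
    refine ⟨N, fun n hn A hA hd => ?_⟩
    rw [conH_card hr hA hd, Nat.cast_mul, ht1]
    exact hN n hn

theorem conH_no_heavy_copy {α : Type*} (F : SimpleGraph α) (r t : ℕ)
    (hr : 3 ≤ r) (ht : 2 ≤ t) (hconn : F.Connected)
    (hcov : ¬ ∃ S : Finset α, S.card ≤ (t - 1) * (r - 2) ∧
      ∀ x y, F.Adj x y → x ∈ S ∨ y ∈ S) :
    (∀ (n : ℕ) (A : Fin (t - 1) → Finset (Fin n)),
      (∀ i, (A i).card = r - 2) → (∀ i j, i ≠ j → Disjoint (A i) (A j)) →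
      ¬ HasHeavyCopy (conH n r A) F t) ∧
    (∀ ε : ℝ, 0 < ε → ∃ N : ℕ, ∀ n ≥ N, ∀ A : Fin (t - 1) → Finset (Fin n),
      (∀ i, (A i).card = r - 2) → (∀ i j, i ≠ j → Disjoint (A i) (A j)) →
      ((t : ℝ) - 1 - ε) * (n.choose 2) ≤ ((conH n r A).card : ℝ) ∧
      ((conH n r A).card : ℝ) ≤ ((t : ℝ) - 1 + ε) * (n.choose 2)) :=
  conH_no_heavy_copy_general F r t hr ht hcov
end

section
/- If a 3-uniform hypergraph H contains no 2-wise Berge copy of the star S_r (the star with r edges), then the graph of 2-heavy edges of H (pairs of vertices contained in at least 2 hyperedges) has maximum degree less than 3r. -/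
open Finset

/-- The star with `r` edges: vertex `0` joined to `r` leaves. -/
def starGraph (r : ℕ) : SimpleGraph (Fin (r + 1)) :=
  SimpleGraph.fromRel (fun x _ => x = 0)

/-!
Fix `v` and let `S` be its set of `2`-heavy neighbours. For each `u ∈ S` choose two hyperedges
through `uv`. The pairs chosen for `u` and `w` can only share a hyperedge if `w` lies in one of
the two triples of `u`, and these contain just two vertices besides `u` and `v`. So the
"conflict" relation on `S` has degree at most `2`, and a greedy choice finds `|S| / 3` vertices
of `S` with pairwise disjoint pairs: a `2`-wise Berge star with that many edges.
-/
theorem Finset.exists_subset_pairwise_card_le {α : Type*} [DecidableEq α] {R : α → α → Prop}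
    [Std.Symm R] (N : α → Finset α) (d : ℕ) (S : Finset α)
    (hN : ∀ a ∈ S, ∀ b ∈ S, a ≠ b → ¬ R a b → b ∈ N a) (hd : ∀ a ∈ S, #(N a) ≤ d) :
    ∃ T ⊆ S, #S ≤ (d + 1) * #T ∧ (T : Set α).Pairwise R := by
  induction S using Finset.strongInduction with
  | H S ih =>
  obtain rfl | ⟨a, ha⟩ := S.eq_empty_or_nonempty
  · exact ⟨∅, empty_subset _, by simp, by simp⟩
  set S' := S \ insert a (N a)
  have haS' : a ∉ S' := by simp [S']
  obtain ⟨T, hTS', hS'T, hT⟩ := ih S' (ssubset_of_subset_of_ne sdiff_subset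
      (fun h => haS' (h ▸ ha)))
    (fun a' ha' b hb => hN a' (sdiff_subset ha') b (sdiff_subset hb))
    (fun a' ha' => hd a' (sdiff_subset ha'))
  refine ⟨insert a T, insert_subset ha (hTS'.trans sdiff_subset), ?_, ?_⟩
  · have hcard : #S ≤ #S' + (d + 1) := calc
      #S ≤ #S' + #(insert a (N a)) := card_le_card_sdiff_add_card
      _ ≤ #S' + (d + 1) := by grw [card_insert_le, hd a ha]
    rw [card_insert_of_notMem (fun h => haS' (hTS' h))]
    linarith
  · rw [coe_insert, Set.pairwise_insert_of_symm]
    refine ⟨hT, fun b hb hab => by_contra fun h => ?_⟩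
    have hbS' := hTS' hb
    simp only [S', mem_sdiff, mem_insert, not_or] at hbS'
    exact hbS'.2.2 (hN a ha b hbS'.1 hab h)

theorem card_biUnion_sdiff_le {α : Type*} [DecidableEq α] {B : Finset (Finset α)} {s : Finset α}
    {k : ℕ} (hB : ∀ A ∈ B, #A = k ∧ s ⊆ A) : #(B.biUnion (· \ s)) ≤ #B * (k - #s) :=
  card_biUnion_le.trans_eq <| sum_const_nat fun A hA => by
    rw [card_sdiff_of_subset (hB A hA).2, (hB A hA).1]

theorem mem_edgeSet_starGraph {r : ℕ} {e : Sym2 (Fin (r + 1))} :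
    e ∈ (starGraph r).edgeSet ↔ ∃ j : Fin r, e = s(0, j.succ) := by
  induction e using Sym2.ind with
  | _ a b =>
  simp only [SimpleGraph.mem_edgeSet, starGraph, SimpleGraph.fromRel_adj]
  constructor
  · rintro ⟨hab, rfl | rfl⟩
    · exact ⟨b.pred (Ne.symm hab), by simp⟩
    · exact ⟨a.pred hab, by rw [Sym2.eq_swap]; simp⟩
  · rintro ⟨j, hj⟩
    rcases Sym2.eq_iff.1 hj with ⟨rfl, rfl⟩ | ⟨rfl, rfl⟩
    · exact ⟨(Fin.succ_ne_zero j).symm, Or.inl rfl⟩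
    · exact ⟨Fin.succ_ne_zero j, Or.inr rfl⟩

theorem hasBergeCopy_starGraph {V : Type*} [DecidableEq V] {H : Finset (Finset V)} {t : ℕ}
    {v : V} {T : Finset V} (hvT : v ∉ T) (g : V → Finset (Finset V))
    (hg : ∀ y ∈ T, g y ⊆ H.filter (fun A => y ∈ A ∧ v ∈ A) ∧ #(g y) = t)
    (hdisj : (T : Set V).PairwiseDisjoint g) :
    HasBergeCopy H (starGraph #T) t := by
  let f : Fin #T ↪ V := T.equivFin.symm.toEmbedding.trans (Function.Embedding.subtype _)
  have hf (j : Fin #T) : f j ∈ T := (T.equivFin.symm j).2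
  let i : Fin (#T + 1) ↪ V := ⟨Fin.cons v f,
    Fin.cons_injective_iff.2 ⟨fun ⟨j, hj⟩ => hvT (hj ▸ hf j), f.injective⟩⟩
  let G : Fin (#T + 1) → Finset (Finset V) := Fin.cons ∅ (fun j => g (f j))
  have hG (j : Fin #T) : G 0 ∪ G j.succ = g (f j) := by simp [G]
  refine ⟨i, Sym2.lift ⟨fun a b => G a ∪ G b, fun _ _ => union_comm _ _⟩, ?_, ?_⟩
  · intro e he
    obtain ⟨j, rfl⟩ := mem_edgeSet_starGraph.1 he
    obtain ⟨hgH, hgt⟩ := hg _ (hf j)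
    simp only [Sym2.lift_mk, hG]
    refine ⟨hgH.trans (filter_subset _ _), hgt, fun A hA x hx => ?_⟩
    have hA' := (mem_filter.1 (hgH hA)).2
    rcases Sym2.mem_iff.1 hx with rfl | rfl
    · exact hA'.2
    · simpa [i] using hA'.1
  · intro e he e' he' hne
    obtain ⟨j, rfl⟩ := mem_edgeSet_starGraph.1 he
    obtain ⟨j', rfl⟩ := mem_edgeSet_starGraph.1 he'
    simp only [Sym2.lift_mk, hG]
    exact hdisj (hf j) (hf j') (f.injective.ne fun h => hne (by rw [h]))

theorem exists_pairwiseDisjoint_heavy_pairs {V : Type*} [DecidableEq V] {H : Finset (Finset V)}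
    (hunif : ∀ A ∈ H, #A = 3) {v : V} {S : Finset V} (hvS : v ∉ S)
    (hS : ∀ u ∈ S, 2 ≤ #(H.filter (fun A => u ∈ A ∧ v ∈ A))) :
    ∃ g : V → Finset (Finset V), ∃ T ⊆ S, #S ≤ 3 * #T ∧
      (∀ y ∈ T, g y ⊆ H.filter (fun A => y ∈ A ∧ v ∈ A) ∧ #(g y) = 2) ∧
      (T : Set V).PairwiseDisjoint g := by
  choose! g hgH hgcard using fun u hu => exists_subset_card_eq (hS u hu)
  have : Std.Symm fun a b => Disjoint (g a) (g b) := ⟨fun _ _ h => h.symm⟩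
  have hmeet : ∀ a ∈ S, ∀ b ∈ S, a ≠ b → ¬ Disjoint (g a) (g b) →
      b ∈ (g a).biUnion (· \ {a, v}) := by
    intro a _ b hb hab hmeet
    obtain ⟨A, hAa, hAb⟩ := not_disjoint_iff.1 hmeet
    have hbA := (mem_filter.1 (hgH b hb hAb)).2.1
    simp only [mem_biUnion, mem_sdiff, mem_insert, mem_singleton, not_or]
    exact ⟨A, hAa, hbA, Ne.symm hab, fun h => hvS (h ▸ hb)⟩
  have hcard : ∀ a ∈ S, #((g a).biUnion (· \ {a, v})) ≤ 2 := by
    intro a ha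
    have hav : a ≠ v := fun h => hvS (h ▸ ha)
    calc #((g a).biUnion (· \ {a, v})) ≤ #(g a) * (3 - #{a, v}) :=
          card_biUnion_sdiff_le fun A hA => by
            have hA' := mem_filter.1 (hgH a ha hA)
            exact ⟨hunif A hA'.1, insert_subset hA'.2.1 (singleton_subset_iff.2 hA'.2.2)⟩
      _ = 2 := by rw [hgcard a ha, card_pair hav]
  obtain ⟨T, hTS, hST, hT⟩ := exists_subset_pairwise_card_le _ 2 S hmeet hcard
  exact ⟨g, T, hTS, hST, fun y hy => ⟨hgH y (hTS hy), hgcard y (hTS hy)⟩, hT⟩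

theorem heavy_graph_max_degree_lt {V : Type*} [Fintype V] [DecidableEq V] (r : ℕ)
    (H : Finset (Finset V)) (hunif : ∀ A ∈ H, A.card = 3)
    (hfree : ¬ HasBergeCopy H (starGraph r) 2) :
    ∀ v : V,
      (Finset.univ.filter (fun u => u ≠ v ∧
        2 ≤ (H.filter (fun A => u ∈ A ∧ v ∈ A)).card)).card < 3 * r := by
  intro v
  by_contra! hdeg
  obtain ⟨g, T, hTS, hST, hg, hdisj⟩ := exists_pairwiseDisjoint_heavy_pairs hunif
    (S := univ.filter fun u => u ≠ v ∧ 2 ≤ #(H.filter (fun A => u ∈ A ∧ v ∈ A)))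
    (by simp) (fun u hu => (mem_filter.1 hu).2.2)
  obtain ⟨T', hT'T, rfl⟩ := exists_subset_card_eq (show r ≤ #T by omega)
  have hvT' : v ∉ T' := fun h => (mem_filter.1 (hTS (hT'T h))).2.1 rfl
  exact hfree <| hasBergeCopy_starGraph hvT' g (fun y hy => hg y (hT'T hy)) (hdisj.subset hT'T)
end

section
/- In a 3-uniform hypergraph containing no 2-wise Berge triangle in which every pair of vertices of every hyperedge is 2-heavy, every hyperedge contains at least two 'nice' pairs, i.e., pairs of its vertices contained in exactly two hyperedges. -/
open Finset

/-
If two pairs `ab`, `ac` of a hyperedge `{a, b, c}` both lie in at least three hyperedges, a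
2-wise Berge triangle on `a, b, c` could be chosen greedily: two hyperedges through `bc`, then two
through `ac` avoiding them, then two through `ab` avoiding those four. Each step discards at most
one candidate, since by 3-uniformity only `{a, b, c}` itself contains all three vertices. Hence at
most one pair of a hyperedge is not nice, as every pair is 2-heavy.
-/

open Function

lemma Fin.three_ne_neg_add {x y : Fin 3} (h : x ≠ y) : x ≠ -(x + y) := by
  revert x y; decide

lemma Fin.three_sym2_eq_of_neg_add_eq {x y x' y' : Fin 3} (h : x ≠ y) (h' : x' ≠ y')
    (heq : -(x + y) = -(x' + y')) : s(x, y) = s(x', y') := by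
  revert x y x' y'; decide

/-- A `t`-wise Berge triangle with the hyperedges of the side `s(x, y)` listed as `S z`, where
`z = -(x + y)` is the vertex of `Fin 3` opposite that side. -/
lemma hasBergeCopy_top_fin_three {V : Type*} {H : Finset (Finset V)} {t : ℕ} (p : Fin 3 ↪ V)
    (S : Fin 3 → Finset (Finset V)) (hSH : ∀ z, S z ⊆ H) (hcard : ∀ z, #(S z) = t)
    (hmem : ∀ z, ∀ A ∈ S z, ∀ x, x ≠ z → p x ∈ A) (hdisj : Pairwise (Disjoint on S)) :
    HasBergeCopy H (⊤ : SimpleGraph (Fin 3)) t := by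
  refine ⟨p, Sym2.lift ⟨fun x y => S (-(x + y)), fun x y => by simp only [add_comm]⟩,
    ?_, ?_⟩
  · rintro ⟨x, y⟩ hxy
    replace hxy : x ≠ y := by simpa using hxy
    refine ⟨hSH _, hcard _, fun A hA w hw => hmem _ A hA w ?_⟩
    rcases Sym2.mem_iff.1 hw with rfl | rfl
    · exact Fin.three_ne_neg_add hxy
    · rw [add_comm]; exact Fin.three_ne_neg_add hxy.symm
  · rintro ⟨x, y⟩ hxy ⟨x', y'⟩ hxy' hne
    replace hxy : x ≠ y := by simpa using hxy
    replace hxy' : x' ≠ y' := by simpa using hxy'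
    exact hdisj fun heq => hne (Fin.three_sym2_eq_of_neg_add_eq hxy hxy' heq)

lemma Finset.exists_subset_card_eq_disjoint {α : Type*} [DecidableEq α] {s t : Finset α}
    {n : ℕ} (h : n + #(s ∩ t) ≤ #s) : ∃ u ⊆ s, #u = n ∧ Disjoint u t := by
  obtain ⟨u, hu, hcard⟩ := exists_subset_card_eq (s := s \ t) (n := n)
    (by have := card_sdiff_add_card_inter s t; omega)
  exact ⟨u, hu.trans sdiff_subset, hcard, disjoint_of_subset_left hu sdiff_disjoint⟩

lemma Finset.eq_of_card_eq_three {α : Type*} [DecidableEq α] {s : Finset α} {a b c : α}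
    (hs : #s = 3) (hab : a ≠ b) (hac : a ≠ c) (hbc : b ≠ c) (ha : a ∈ s) (hb : b ∈ s)
    (hc : c ∈ s) : s = {a, b, c} :=
  (eq_of_subset_of_card_le (by simp [insert_subset_iff, *])
    (by rw [hs, card_eq_three.2 ⟨a, b, c, hab, hac, hbc, rfl⟩])).symm

section Hypergraph

variable {V : Type*} [DecidableEq V] {H : Finset (Finset V)}

def edgesThrough (H : Finset (Finset V)) (u v : V) : Finset (Finset V) :=
  H.filter fun B => u ∈ B ∧ v ∈ B

lemma edgesThrough_comm (H : Finset (Finset V)) (u v : V) :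
    edgesThrough H u v = edgesThrough H v u :=
  filter_congr fun _ _ => and_comm

lemma mem_edgesThrough {u v : V} {B : Finset V} :
    B ∈ edgesThrough H u v ↔ B ∈ H ∧ u ∈ B ∧ v ∈ B :=
  mem_filter

lemma card_edgesThrough_inter_le_one (hunif : ∀ A ∈ H, #A = 3) {a b c : V} (hab : a ≠ b)
    (hac : a ≠ c) (hbc : b ≠ c) {T : Finset (Finset V)} (hT : ∀ B ∈ T, c ∈ B) :
    #(edgesThrough H a b ∩ T) ≤ 1 := by
  have heq : ∀ B ∈ edgesThrough H a b ∩ T, B = {a, b, c} := by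
    intro B hB
    obtain ⟨⟨hBH, ha, hb⟩, hBT⟩ := mem_inter.1 hB |>.imp_left mem_edgesThrough.1
    exact eq_of_card_eq_three (hunif B hBH) hab hac hbc ha hb (hT B hBT)
  exact card_le_one.2 fun B hB B' hB' => (heq B hB).trans (heq B' hB').symm

lemma hasBergeCopy_of_three_le_card_edgesThrough (hunif : ∀ A ∈ H, #A = 3) {a b c : V}
    (hab : a ≠ b) (hac : a ≠ c) (hbc : b ≠ c) (h_ab : 3 ≤ #(edgesThrough H a b))
    (h_ac : 3 ≤ #(edgesThrough H a c)) (h_bc : 2 ≤ #(edgesThrough H b c)) :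
    HasBergeCopy H (⊤ : SimpleGraph (Fin 3)) 2 := by
  have through : ∀ {S u v}, S ⊆ edgesThrough H u v →
      ∀ B ∈ S, B ∈ H ∧ u ∈ B ∧ v ∈ B :=
    fun hS B hB => mem_edgesThrough.1 (hS hB)
  obtain ⟨Sbc, hSbc, hSbc_card⟩ := exists_subset_card_eq h_bc
  obtain ⟨Sac, hSac, hSac_card, hSac_disj⟩ := exists_subset_card_eq_disjoint
    (s := edgesThrough H a c) (t := Sbc) (n := 2)
    (by have := card_edgesThrough_inter_le_one hunif hac hab hbc.symm
          fun B hB => (through hSbc B hB).2.1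
        omega)
  obtain ⟨Sab, hSab, hSab_card, hSab_disj⟩ := exists_subset_card_eq_disjoint
    (s := edgesThrough H a b) (t := Sbc ∪ Sac) (n := 2)
    (by have := card_edgesThrough_inter_le_one hunif hab hac hbc (T := Sbc ∪ Sac) fun B hB =>
          (mem_union.1 hB).elim (fun h => (through hSbc B h).2.2)
            (fun h => (through hSac B h).2.2)
        omega)
  refine hasBergeCopy_top_fin_three ⟨![a, b, c], ?_⟩ ![Sbc, Sac, Sab] ?_ ?_ ?_ ?_
  · intro x y; fin_cases x <;> fin_cases y <;> simp [hab, hac, hbc, hab.symm, hac.symm, hbc.symm]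
  · intro z; fin_cases z
    exacts [fun B hB => (through hSbc B hB).1, fun B hB => (through hSac B hB).1,
      fun B hB => (through hSab B hB).1]
  · intro z; fin_cases z <;> assumption
  · intro z A hA x hx
    fin_cases z <;> fin_cases x <;> simp at hA hx ⊢
    exacts [(through hSbc A hA).2.1, (through hSbc A hA).2.2,
      (through hSac A hA).2.1, (through hSac A hA).2.2,
      (through hSab A hA).2.1, (through hSab A hA).2.2]
  · obtain ⟨hSab_bc, hSab_ac⟩ := disjoint_union_right.1 hSab_disj
    intro x y hxy
    fin_cases x <;> fin_cases y <;> simp [onFun] at hxy ⊢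
    exacts [hSac_disj.symm, hSab_bc.symm, hSac_disj, hSab_ac.symm, hSab_bc, hSab_ac]

lemma card_edgesThrough_eq_two_or_eq_two
    (hunif : ∀ A ∈ H, #A = 3) (hfree : ¬ HasBergeCopy H (⊤ : SimpleGraph (Fin 3)) 2)
    {a b c : V} (hab : a ≠ b) (hac : a ≠ c) (hbc : b ≠ c)
    (h_ab : 2 ≤ #(edgesThrough H a b)) (h_ac : 2 ≤ #(edgesThrough H a c))
    (h_bc : 2 ≤ #(edgesThrough H b c)) :
    #(edgesThrough H a b) = 2 ∨ #(edgesThrough H a c) = 2 := by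
  by_contra! h
  exact hfree (hasBergeCopy_of_three_le_card_edgesThrough hunif hab hac hbc (by omega)
    (by omega) h_bc)

lemma two_of_three_card_edgesThrough_eq_two
    (hunif : ∀ A ∈ H, #A = 3) (hfree : ¬ HasBergeCopy H (⊤ : SimpleGraph (Fin 3)) 2)
    {a b c : V} (hab : a ≠ b) (hac : a ≠ c) (hbc : b ≠ c)
    (h_ab : 2 ≤ #(edgesThrough H a b)) (h_ac : 2 ≤ #(edgesThrough H a c))
    (h_bc : 2 ≤ #(edgesThrough H b c)) :
    #(edgesThrough H a b) = 2 ∧ #(edgesThrough H a c) = 2 ∨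
      #(edgesThrough H a b) = 2 ∧ #(edgesThrough H b c) = 2 ∨
      #(edgesThrough H a c) = 2 ∧ #(edgesThrough H b c) = 2 := by
  have nice_a := card_edgesThrough_eq_two_or_eq_two hunif hfree hab hac hbc h_ab h_ac h_bc
  have nice_b := card_edgesThrough_eq_two_or_eq_two hunif hfree hab.symm hbc hac
    (by rwa [edgesThrough_comm]) h_bc h_ac
  have nice_c := card_edgesThrough_eq_two_or_eq_two hunif hfree hac.symm hbc.symm hab
    (by rwa [edgesThrough_comm]) (by rwa [edgesThrough_comm]) h_ab
  rw [edgesThrough_comm H b a] at nice_b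
  rw [edgesThrough_comm H c a, edgesThrough_comm H c b] at nice_c
  omega

end Hypergraph

theorem two_nice_pairs {V : Type*} [DecidableEq V]
    (H : Finset (Finset V)) (hunif : ∀ A ∈ H, A.card = 3)
    (hfree : ¬ HasBergeCopy H (⊤ : SimpleGraph (Fin 3)) 2)
    (hheavy : ∀ A ∈ H, ∀ u ∈ A, ∀ v ∈ A, u ≠ v →
      2 ≤ (H.filter (fun B => u ∈ B ∧ v ∈ B)).card) :
    ∀ A ∈ H, ∃ u v u' v' : V, u ∈ A ∧ v ∈ A ∧ u' ∈ A ∧ v' ∈ A ∧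
      u ≠ v ∧ u' ≠ v' ∧ ({u, v} : Finset V) ≠ {u', v'} ∧
      (H.filter (fun B => u ∈ B ∧ v ∈ B)).card = 2 ∧
      (H.filter (fun B => u' ∈ B ∧ v' ∈ B)).card = 2 := by
  intro A hA
  obtain ⟨a, b, c, hab, hac, hbc, rfl⟩ := card_eq_three.1 (hunif A hA)
  have ha : a ∈ ({a, b, c} : Finset V) := by simp
  have hb : b ∈ ({a, b, c} : Finset V) := by simp
  have hc : c ∈ ({a, b, c} : Finset V) := by simp
  have ha_bc : a ∉ ({b, c} : Finset V) := by simp [hab, hac]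
  rcases two_of_three_card_edgesThrough_eq_two hunif hfree hab hac hbc
      (hheavy _ hA a ha b hb hab) (hheavy _ hA a ha c hc hac) (hheavy _ hA b hb c hc hbc) with
    ⟨h_ab, h_ac⟩ | ⟨h_ab, h_bc⟩ | ⟨h_ac, h_bc⟩
  · refine ⟨a, b, a, c, ha, hb, ha, hc, hab, hac, ?_, h_ab, h_ac⟩
    exact ne_of_mem_of_not_mem' (a := b) (by simp) (by simp [hab.symm, hbc])
  · exact ⟨a, b, b, c, ha, hb, hb, hc, hab, hbc, ne_of_mem_of_not_mem' (by simp) ha_bc,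
      h_ab, h_bc⟩
  · exact ⟨a, c, b, c, ha, hc, hb, hc, hac, hbc, ne_of_mem_of_not_mem' (by simp) ha_bc,
      h_ac, h_bc⟩
end
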